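/- arXiv:nlin/0308031 — 2 statements merged into one kernel-verified Lean document; each statement's English description precedes it below -/
import Mathlib

section
/- Suppose the connection matrix C satisfies ∑_j c_{ij} = c for all i, and S(θ, c f(θ,θ)) > 0 for all θ ∈ ℝ. Then the function θ̄ solving θ̄' = S(θ̄, c f(θ̄, θ̄)), extended to the vector θ_i(t) = θ̄(t) for all i, is a solution of the coupled system θ_i' = S(θ_i, ∑_j c_{ij} f(θ_i, θ_j)) for 1 ≤ i ≤ n, and it satisfies θ̄(t+T) = θ̄(t) + 2π with T = ∫₀^{2π} dθ / S(θ, c f(θ,θ)). -/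
open Real

/-!
Put `g θ = S(θ, c f(θ,θ))`. Since the row sums of `C` equal `c`, every equation of the coupled
system reduces to `θ' = g θ` along the diagonal. For the period, substituting `x = θ̄ s` gives
`∫_{θ̄ t}^{θ̄ (t+T)} dx / g x = T`, while periodicity of `g` gives `∫_{θ̄ t}^{θ̄ t + 2π} dx / g x = T`;
as `x ↦ ∫ dx / g x` is strictly increasing, `θ̄ (t+T) = θ̄ t + 2π`.
-/

open intervalIntegral

theorem strictMono_integral_of_pos {h : ℝ → ℝ} (hc : Continuous h) (hpos : ∀ x, 0 < h x)
    (a : ℝ) : StrictMono fun x => ∫ y in a..x, h y := by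
  intro x y hxy
  have hxy' : 0 < ∫ z in x..y, h z :=
    intervalIntegral_pos_of_pos (hc.intervalIntegrable x y) hpos hxy
  rw [← integral_interval_sub_left (hc.intervalIntegrable a y) (hc.intervalIntegrable a x)] at hxy'
  simpa only [sub_pos] using hxy'

section AutonomousEquation

variable {g θ : ℝ → ℝ}

theorem integral_one_div_comp_solution (hg : Continuous g) (hpos : ∀ x, 0 < g x)
    (hθ : ∀ t, HasDerivAt θ (g (θ t)) t) (s t : ℝ) :
    ∫ x in θ s..θ t, 1 / g x = t - s := by
  have hθc : Continuous θ := continuous_iff_continuousAt.2 fun t => (hθ t).continuousAt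
  have hsubst := integral_comp_mul_deriv (a := s) (b := t) (fun u _ => hθ u)
    (hg.comp hθc).continuousOn
    (continuous_const.div hg fun x => (hpos x).ne' : Continuous fun x => 1 / g x)
  simpa [(hpos _).ne'] using hsubst.symm

theorem Function.Periodic.solution_add_integral_one_div (hg : Continuous g)
    (hpos : ∀ x, 0 < g x) {p : ℝ} (hper : Function.Periodic g p)
    (hθ : ∀ t, HasDerivAt θ (g (θ t)) t) (t : ℝ) :
    θ (t + ∫ x in (0:ℝ)..p, 1 / g x) = θ t + p := by
  have hinv : Continuous fun x => 1 / g x := continuous_const.div hg fun x => (hpos x).ne'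
  have hinv_per : Function.Periodic (fun x => 1 / g x) p := fun x => by simp only [hper x]
  apply (strictMono_integral_of_pos hinv (fun x => one_div_pos.2 (hpos x)) (θ t)).injective
  dsimp only
  rw [integral_one_div_comp_solution hg hpos hθ, add_sub_cancel_left,
    hinv_per.intervalIntegral_add_eq (θ t) 0, zero_add]

end AutonomousEquation

/-- If the row sums of the connection matrix are all `c` and
`S(θ, c f(θ,θ)) > 0`, then the solution `θ̄` of the scalar equation
`θ̄' = S(θ̄, c f(θ̄,θ̄))` gives a synchronized solution of the coupled system,
and satisfies `θ̄(t+T) = θ̄(t) + 2π` with `T = ∫₀^{2π} dθ / S(θ, c f(θ,θ))`. -/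
theorem synchronized_oscillation_coupled_system (n : ℕ)
    (S f : ℝ → ℝ → ℝ)
    (hS : ContDiff ℝ 1 (fun p : ℝ × ℝ => S p.1 p.2))
    (hf : ContDiff ℝ 1 (fun p : ℝ × ℝ => f p.1 p.2))
    (hSper : ∀ x y : ℝ, S (x + 2 * π) y = S x y)
    (hfper1 : ∀ x y : ℝ, f (x + 2 * π) y = f x y)
    (hfper2 : ∀ x y : ℝ, f x (y + 2 * π) = f x y)
    (C : Matrix (Fin n) (Fin n) ℝ) (c : ℝ)
    (hrow : ∀ i : Fin n, ∑ j, C i j = c)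
    (hpos : ∀ θ : ℝ, 0 < S θ (c * f θ θ))
    (θbar : ℝ → ℝ)
    (hθbar : ∀ t : ℝ, HasDerivAt θbar (S (θbar t) (c * f (θbar t) (θbar t))) t) :
    (∀ (i : Fin n) (t : ℝ),
      HasDerivAt θbar (S (θbar t) (∑ j, C i j * f (θbar t) (θbar t))) t) ∧
    (∀ t : ℝ, θbar (t + ∫ θ in (0:ℝ)..(2 * π), 1 / S θ (c * f θ θ))
        = θbar t + 2 * π) := by
  refine ⟨fun i t => by simpa only [← Finset.sum_mul, hrow i] using hθbar t, ?_⟩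
  have hg : Continuous fun θ => S θ (c * f θ θ) :=
    hS.continuous.comp (continuous_id.prodMk
      (continuous_const.mul (hf.continuous.comp (continuous_id.prodMk continuous_id))))
  have hper : Function.Periodic (fun θ => S θ (c * f θ θ)) (2 * π) := fun θ => by
    simp only [hfper1, hfper2, hSper]
  exact hper.solution_add_integral_one_div hg hpos hθbar
end

section
/- Let C be the 3 × 3 real matrix with zero diagonal, entries c₁₂, c − c₁₂ in the first row, c − c₂₃, 0, c₂₃ in the second row, and c₃₁, c − c₃₁, 0 in the third row. Then its eigenvalues are c, λ₂, λ₃, where (λ₂ − c)(λ₃ − c) = 3c² − (c₁₂ + c₂₃ + c₃₁)c + (c₁₂c₂₃ + c₁₂c₃₁ + c₂₃c₃₁) and (λ₂ − c) + (λ₃ − c) = −3c. -/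
open Polynomial

/-- The 3×3 connection matrix has eigenvalues `c, λ₂, λ₃` with
`(λ₂−c)(λ₃−c) = Δ` and `(λ₂−c)+(λ₃−c) = −3c`. -/
theorem three_oscillator_eigenvalues (c c₁₂ c₂₃ c₃₁ : ℝ)
    (A : Matrix (Fin 3) (Fin 3) ℝ)
    (hA : A = !![0, c₁₂, c - c₁₂; c - c₂₃, 0, c₂₃; c₃₁, c - c₃₁, 0]) :
    ∃ l₂ l₃ : ℂ,
      (A.map (Complex.ofReal)).charpoly =
        (X - Polynomial.C (c : ℂ)) * (X - Polynomial.C l₂) * (X - Polynomial.C l₃) ∧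
      (l₂ - c) * (l₃ - c) =
        3 * c ^ 2 - (c₁₂ + c₂₃ + c₃₁) * c + (c₁₂ * c₂₃ + c₁₂ * c₃₁ + c₂₃ * c₃₁) ∧
      (l₂ - c) + (l₃ - c) = -3 * c := by
  obtain ⟨s, hs⟩ : ∃ s : ℂ, s ^ 2 = 9 * (c:ℂ) ^ 2 -
      4 * (3 * (c:ℂ) ^ 2 - ((c₁₂:ℂ) + c₂₃ + c₃₁) * c +
        ((c₁₂:ℂ) * c₂₃ + c₁₂ * c₃₁ + c₂₃ * c₃₁)) :=
    IsAlgClosed.exists_pow_nat_eq _ (by norm_num : (0:ℕ) < 2)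
  refine ⟨c + (-3 * c + s) / 2, c + (-3 * c - s) / 2, ?_, ?_, by ring⟩
  · have key : ∀ (a b d e f g h i j : ℂ) (M : Matrix (Fin 3) (Fin 3) ℂ),
        M = !![a,b,d; e,f,g; h,i,j] →
        M.charpoly = X^3 - C (a+f+j)*X^2 + C (a*f+a*j+f*j - b*e - d*h - g*i)*X
          - C (a*f*j + b*g*h + d*e*i - a*g*i - b*e*j - d*f*h) := by
      intro a b d e f g h i j M hM
      subst hM
      rw [Matrix.charpoly, Matrix.det_fin_three]
      simp [Matrix.charmatrix_apply]
      ring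
    have hmap : A.map (Complex.ofReal) =
        !![0, (c₁₂:ℂ), (c:ℂ) - c₁₂; (c:ℂ) - c₂₃, 0, (c₂₃:ℂ); (c₃₁:ℂ), (c:ℂ) - c₃₁, 0] := by
      subst hA
      ext i j
      fin_cases i <;> fin_cases j <;> simp
    rw [key _ _ _ _ _ _ _ _ _ _ hmap]
    have expand : ∀ a b d : ℂ, (X - C a) * (X - C b) * (X - C d) =
        X^3 - C (a+b+d)*X^2 + C (a*b+a*d+b*d)*X - C (a*b*d) := by
      intro a b d
      simp only [C_add, C_mul]
      ring
    rw [expand]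
    congr 1
    · congr 2
      · congr 1; ring
      · congr 1; linear_combination ((1:ℂ)/4) * hs
    · congr 1; linear_combination ((c:ℂ)/4) * hs
  · field_simp
    linear_combination (-1:ℂ) * hs
end
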